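/- arXiv:1012.4047 — 5 statements merged into one kernel-verified Lean document; each statement's English description precedes it below -/
import Mathlib

section
/- Let b be a nonnegative even integer and let k and m be positive integers with m = 1 and k even. Then E_{2k+b} - E_b ≡ 2k(-(b-7)^2 + 38 + 2k(3b - 1 + 2k)) (mod 2^{8}). -/
/-!
Modulo `2 ^ 8`, `E (2n)` agrees with `A (2n)`, where
`A N = 1 + 4 C(N,1) - 10 C(N,2) + 10 C(N,3) + 8 C(N,4)`. Indeed `A` satisfies the recurrence
of the Euler numbers modulo `2 ^ 8`: comparing coefficients of `x ^ j` in
`(x + 2) ^ 2n + x ^ 2n = 2 ∑ C(2n,2r) (x + 1) ^ 2r` gives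
`2 ∑ C(2n,2r) C(2r,j) = C(2n,j) 2 ^ (2n - j)`, which is divisible by `2 ^ 9` for `j ≤ 4` once
`n ≥ 6`. Since `3 A N` is an integer polynomial of degree 4 in `N` and `3` is a unit modulo
`2 ^ 8`, the congruence becomes a polynomial identity modulo `2 ^ 8` in `b / 2` and `k / 2`.
-/

/-- The Euler numbers `E n`, defined by `E 0 = 1`, `E (2n-1) = 0` for `n ≥ 1`,
and `∑_{r=0}^{n} C(2n, 2r) * E (2r) = 0` for `n ≥ 1`. -/
def eulerE : ℕ → ℤ
  | 0 => 1
  | 1 => 0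
  | n + 2 =>
      if Even n then
        -∑ r ∈ (Finset.range (n / 2 + 1)).attach,
          ((n + 2).choose (2 * r.1) : ℤ) * eulerE (2 * r.1)
      else 0
  decreasing_by
    have := r.2
    simp only [Finset.mem_range] at this
    omega

open Finset Polynomial

theorem sum_range_one_add_neg_one_pow_mul {R : Type*} [CommRing R]
    (f : ℕ → R) (n : ℕ) :
    ∑ k ∈ range (2 * n + 1), (1 + (-1 : R) ^ k) * f k = 2 * ∑ r ∈ range (n + 1), f (2 * r) := by
  induction n with
  | zero =>
    simp only [mul_zero, zero_add, range_one, sum_singleton, pow_zero]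
    ring
  | succ n ih =>
    have hodd : (-1 : R) ^ (2 * n + 1) = -1 := (odd_two_mul_add_one n).neg_one_pow
    have heven : (-1 : R) ^ (2 * n + 1 + 1) = 1 := Even.neg_one_pow ⟨n + 1, by ring⟩
    rw [show 2 * (n + 1) + 1 = 2 * n + 1 + 1 + 1 by ring, sum_range_succ, sum_range_succ, ih,
      hodd, heven, sum_range_succ _ (n + 1), show 2 * n + 1 + 1 = 2 * (n + 1) by ring]
    ring

theorem add_one_pow_add_sub_one_pow_two_mul {R : Type*} [CommRing R] (x : R) (n : ℕ) :
    (x + 1) ^ (2 * n) + (x - 1) ^ (2 * n)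
      = 2 * ∑ r ∈ range (n + 1), ((2 * n).choose (2 * r) : R) * x ^ (2 * r) := by
  rw [sub_eq_add_neg, add_pow, add_pow, ← sum_add_distrib,
    ← sum_range_one_add_neg_one_pow_mul (fun k => ((2 * n).choose k : R) * x ^ k)]
  refine sum_congr rfl fun k hk => ?_
  have hparity : (2 * n - k) % 2 = k % 2 := by
    have := mem_range.mp hk
    omega
  rw [neg_one_pow_eq_pow_mod_two (2 * n - k), hparity, ← neg_one_pow_eq_pow_mod_two]
  ring

theorem two_mul_sum_choose_mul_choose (n j : ℕ) (hj : j < 2 * n) :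
    2 * ∑ r ∈ range (n + 1), (2 * n).choose (2 * r) * (2 * r).choose j
      = (2 * n).choose j * 2 ^ (2 * n - j) := by
  have h := congrArg (coeff · j) (add_one_pow_add_sub_one_pow_two_mul (X + 1 : ℤ[X]) n)
  simp only [add_assoc, one_add_one_eq_two, add_sub_cancel_right, coeff_add] at h
  rw [← C_ofNat, coeff_X_add_C_pow, coeff_X_pow, if_neg hj.ne, coeff_C_mul, finsetSum_coeff] at h
  simp only [← C_eq_natCast, coeff_C_mul, coeff_X_add_one_pow] at h
  zify
  linear_combination -h

theorem factorial_mul_choose_eq_prod_range {R : Type*} [CommRing R] (N k : ℕ) :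
    ((k.factorial * N.choose k : ℕ) : R) = ∏ j ∈ range k, ((N : R) - j) := by
  rw [← Nat.descFactorial_eq_factorial_mul_choose, ← descPochhammer_eval_eq_descFactorial,
    descPochhammer_eval_eq_prod_range]

theorem sum_choose_mul_eulerE {n : ℕ} (hn : 1 ≤ n) :
    ∑ r ∈ range (n + 1), ((2 * n).choose (2 * r) : ℤ) * eulerE (2 * r) = 0 := by
  obtain ⟨m, rfl⟩ : ∃ m, n = m + 1 := ⟨n - 1, by omega⟩
  have hrec : eulerE (2 * m + 2)
      = -∑ r ∈ range (m + 1), ((2 * m + 2).choose (2 * r) : ℤ) * eulerE (2 * r) := by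
    rw [eulerE, if_pos (even_two_mul m), Nat.mul_div_cancel_left m two_pos,
      sum_attach (range (m + 1)) (fun r => ((2 * m + 2).choose (2 * r) : ℤ) * eulerE (2 * r))]
  rw [sum_range_succ, Nat.choose_self, show 2 * (m + 1) = 2 * m + 2 by ring, hrec]
  push_cast
  ring

def eulerApprox (N : ℕ) : ℤ :=
  1 + 4 * N.choose 1 - 10 * N.choose 2 + 10 * N.choose 3 + 8 * N.choose 4

theorem dvd_sum_choose_mul_eulerApprox {n : ℕ} (hn : 1 ≤ n) :
    (256 : ℤ) ∣ ∑ r ∈ range (n + 1), ((2 * n).choose (2 * r) : ℤ) * eulerApprox (2 * r) := by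
  rcases lt_or_ge n 6 with hsmall | hlarge
  -- below `n = 6` the powers `2 ^ (2n - j)` are too small to give the factor `2 ^ 8`
  · interval_cases n <;> decide
  set s : ℕ → ℤ := fun j => ∑ r ∈ range (n + 1), ((2 * n).choose (2 * r) * (2 * r).choose j : ℤ)
  have hsplit : ∑ r ∈ range (n + 1), ((2 * n).choose (2 * r) : ℤ) * eulerApprox (2 * r)
      = s 0 + 4 * s 1 - 10 * s 2 + 10 * s 3 + 8 * s 4 := by
    simp only [s, mul_sum, ← sum_add_distrib, ← sum_sub_distrib]
    refine sum_congr rfl fun r _ => ?_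
    simp only [eulerApprox, Nat.choose_zero_right]
    ring
  obtain ⟨m, hm⟩ : ∃ m, 2 * n = m + 12 := ⟨2 * n - 12, by omega⟩
  have hs : ∀ j ≤ 4, 2 * s j = (2 * n).choose j * 2 ^ m * 2 ^ (12 - j) := fun j hj => by
    rw [mul_assoc, ← pow_add, show m + (12 - j) = 2 * n - j by omega]
    simpa [s] using congrArg (Nat.cast : ℕ → ℤ) (two_mul_sum_choose_mul_choose n j (by omega))
  refine ⟨2 ^ m * (8 * (2 * n).choose 0 + 16 * (2 * n).choose 1 - 20 * (2 * n).choose 2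
    + 10 * (2 * n).choose 3 + 4 * (2 * n).choose 4), mul_left_cancel₀ two_ne_zero ?_⟩
  rw [hsplit]
  linear_combination hs 0 (by norm_num) + 4 * hs 1 (by norm_num) - 10 * hs 2 (by norm_num)
    + 10 * hs 3 (by norm_num) + 8 * hs 4 (by norm_num)

theorem eulerE_two_mul_cast_eq_eulerApprox (n : ℕ) :
    (eulerE (2 * n) : ZMod 256) = eulerApprox (2 * n) := by
  induction n using Nat.strong_induction_on with
  | _ n ih =>
  rcases Nat.eq_zero_or_pos n with rfl | hn
  · norm_num [eulerE, eulerApprox]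
  have hE := congrArg (Int.cast : ℤ → ZMod 256) (sum_choose_mul_eulerE hn)
  have hA := (ZMod.intCast_zmod_eq_zero_iff_dvd _ 256).mpr (dvd_sum_choose_mul_eulerApprox hn)
  push_cast at hE hA
  rw [sum_range_succ, Nat.choose_self, Nat.cast_one, one_mul] at hE hA
  rw [sum_congr rfl fun r hr => by rw [ih r (mem_range.mp hr)]] at hE
  linear_combination hE - hA

theorem three_mul_eulerApprox (N : ℕ) :
    3 * eulerApprox N = 3 + 12 * N - 15 * N * (N - 1) + 5 * N * (N - 1) * (N - 2)
      + N * (N - 1) * (N - 2) * (N - 3) := by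
  have h₂ := factorial_mul_choose_eq_prod_range (R := ℤ) N 2
  have h₃ := factorial_mul_choose_eq_prod_range (R := ℤ) N 3
  have h₄ := factorial_mul_choose_eq_prod_range (R := ℤ) N 4
  simp only [prod_range_succ, prod_range_zero, Nat.factorial, Nat.cast_mul, Nat.cast_ofNat,
    Nat.cast_one, Nat.cast_zero] at h₂ h₃ h₄
  simp only [eulerApprox, Nat.choose_one_right]
  linear_combination -15 * h₂ + 5 * h₃ + h₄

theorem eulerApprox_two_mul_add_four_mul_sub (c q : ℕ) :
    (eulerApprox (2 * c + 4 * q) : ZMod 256) - eulerApprox (2 * c)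
      = 4 * q * (-(2 * c - 7) ^ 2 + 38 + 4 * q * (6 * c - 1 + 4 * q)) := by
  have hunit : IsUnit (3 : ZMod 256) := IsUnit.of_mul_eq_one 171 (by decide)
  refine hunit.mul_left_cancel ?_
  have h₁ := congrArg (Int.cast : ℤ → ZMod 256) (three_mul_eulerApprox (2 * c + 4 * q))
  have h₀ := congrArg (Int.cast : ℤ → ZMod 256) (three_mul_eulerApprox (2 * c))
  obtain ⟨u, hu⟩ := Nat.even_mul_succ_self c
  have hu' := congrArg (Nat.cast : ℕ → ZMod 256) hu
  push_cast at h₁ h₀ hu'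
  -- modulo `256` the two sides differ by `128 (c (c + 1) q (q + 1) + c ^ 2 (c - 1) q)`
  linear_combination (norm := skip) h₁ - h₀ + 128 * (q * (q + 1) + c * q) * hu'
  rw [← sub_eq_zero]
  ring_nf
  reduce_mod_char

theorem stern_ext_m_eq_one_k_even_general (b k m : ℕ) (hb : Even b)
    (hm1 : m = 1) (hke : Even k) :
    eulerE (2 ^ m * k + b) - eulerE b ≡
      2 * k * (-((b : ℤ) - 7) ^ 2 + 38 + 2 * k * (3 * b - 1 + 2 * k)) [ZMOD 2 ^ 8] := by
  subst hm1
  obtain ⟨c, rfl⟩ := hb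
  obtain ⟨q, rfl⟩ := hke
  rw [show (2 : ℤ) ^ 8 = ((256 : ℕ) : ℤ) by norm_num, ← ZMod.intCast_eq_intCast_iff,
    show 2 ^ 1 * (q + q) + (c + c) = 2 * (c + 2 * q) by ring, show c + c = 2 * c by ring]
  push_cast
  rw [eulerE_two_mul_cast_eq_eulerApprox, eulerE_two_mul_cast_eq_eulerApprox,
    show 2 * (c + 2 * q) = 2 * c + 4 * q by ring, eulerApprox_two_mul_add_four_mul_sub]
  ring

theorem stern_ext_m_eq_one_k_even (b k m : ℕ) (hb : Even b) (hk : 0 < k) (hm : 0 < m)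
    (hm1 : m = 1) (hke : Even k) :
    eulerE (2 ^ m * k + b) - eulerE b ≡
      2 * k * (-((b : ℤ) - 7) ^ 2 + 38 + 2 * k * (3 * b - 1 + 2 * k)) [ZMOD 2 ^ 8] :=
  stern_ext_m_eq_one_k_even_general b k m hb hm1 hke
end

section
/- Let b be a nonnegative even integer and let k be an odd positive integer. Then E_{2k+b} - E_b ≡ 2k(-(b+1)^2 + 6 + 2k(3b - 1 + 2k)) - 16(b + (-1)^{b/2}) (mod 2^{8}). -/
open Finset PowerSeries
open scoped Nat

lemma eulerE_zero : eulerE 0 = 1 := by rw [eulerE]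

lemma eulerE_of_odd {n : ℕ} (hn : Odd n) : eulerE n = 0 := by
  obtain ⟨k, rfl⟩ := hn
  rcases k with _ | k
  · rw [show 2 * 0 + 1 = 1 by rfl, eulerE]
  · rw [show 2 * (k + 1) + 1 = (2 * k + 1) + 2 by ring, eulerE]
    simp [parity_simps]

lemma sum_range_two_mul_add_one_of_odd_eq_zero {M : Type*} [AddCommMonoid M] {f : ℕ → M}
    (hf : ∀ k, f (2 * k + 1) = 0) (n : ℕ) :
    ∑ k ∈ range (2 * n + 1), f k = ∑ r ∈ range (n + 1), f (2 * r) := by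
  induction n with
  | zero => simp
  | succ n ih =>
    rw [show 2 * (n + 1) + 1 = 2 * n + 1 + 1 + 1 by ring, sum_range_succ, sum_range_succ, ih,
      hf, add_zero, sum_range_succ _ (n + 1), mul_add_one]

lemma sum_range_choose_mul_eulerE (n : ℕ) :
    ∑ k ∈ range (2 * n + 3), ((2 * n + 2).choose k : ℤ) * eulerE k = 0 := by
  have hodd (k : ℕ) : ((2 * n + 2).choose (2 * k + 1) : ℤ) * eulerE (2 * k + 1) = 0 := by
    rw [eulerE_of_odd (odd_two_mul_add_one k), mul_zero]
  rw [show 2 * n + 3 = 2 * (n + 1) + 1 by ring, sum_range_two_mul_add_one_of_odd_eq_zero hodd,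
    sum_range_succ, mul_add_one, Nat.choose_self, eulerE, if_pos (even_two_mul n),
    Nat.mul_div_cancel_left n two_pos,
    sum_attach (range (n + 1)) fun r => ((2 * n + 2).choose (2 * r) : ℤ) * eulerE (2 * r)]
  push_cast
  ring

lemma coeff_mk_div_factorial_mul (a b : ℕ → ℚ) (n : ℕ) :
    coeff n (mk (fun k => a k / k !) * mk fun k => b k / k !) =
      (∑ k ∈ range (n + 1), n.choose k * a k * b (n - k)) / n ! := by
  rw [coeff_mul, Nat.sum_antidiagonal_eq_sum_range_succ_mk, sum_div]
  refine sum_congr rfl fun k hk => ?_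
  rw [coeff_mk, coeff_mk, Nat.cast_choose ℚ (Nat.lt_succ_iff.1 (mem_range.1 hk))]
  field_simp

lemma exp_eq_mk : exp ℚ = mk fun n => 1 / (n ! : ℚ) := by
  ext n
  simp [coeff_exp]

def eulerSeries : ℚ⟦X⟧ := mk fun n => (eulerE n : ℚ) / n !

lemma rescale_neg_one_eulerSeries : rescale (-1) eulerSeries = eulerSeries := by
  rw [eulerSeries, rescale_mk]
  congr 1
  ext n
  rcases n.even_or_odd with hn | hn
  · rw [hn.neg_one_pow, one_mul]
  · rw [eulerE_of_odd hn]
    simp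

lemma eulerSeries_mul_exp_add_rescale_exp :
    eulerSeries * (exp ℚ + rescale (-1) (exp ℚ)) = 2 := by
  have hcoeff (n : ℕ) :
      (1 + (-1) ^ n) * coeff n (eulerSeries * exp ℚ) = coeff n (2 : ℚ⟦X⟧) := by
    rw [eulerSeries, exp_eq_mk, coeff_mk_div_factorial_mul, ← map_ofNat (C (R := ℚ)) 2, coeff_C]
    simp only [mul_one]
    rcases n.even_or_odd with ⟨j, rfl⟩ | hn
    · rcases j with _ | j
      · norm_num [eulerE_zero]
      · rw [if_neg (by omega), show j + 1 + (j + 1) = 2 * j + 2 by ring]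
        exact_mod_cast by simp [sum_range_choose_mul_eulerE]
    · rw [hn.neg_one_pow, if_neg (by rintro rfl; simp at hn)]
      ring
  calc eulerSeries * (exp ℚ + rescale (-1) (exp ℚ))
      = eulerSeries * exp ℚ + rescale (-1) (eulerSeries * exp ℚ) := by
        rw [map_mul, rescale_neg_one_eulerSeries, mul_add]
    _ = 2 := by
        ext n
        rw [map_add, coeff_rescale, ← hcoeff]
        ring

lemma rescale_two_exp_mul_eulerSeries_add :
    rescale 2 (exp ℚ) * eulerSeries + eulerSeries = 2 * exp ℚ := by
  have hsq : rescale 2 (exp ℚ) = exp ℚ * exp ℚ := by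
    rw [← one_add_one_eq_two, ← exp_mul_exp_eq_exp_add, rescale_one, RingHom.id_apply]
  have hinv : exp ℚ * rescale (-1) (exp ℚ) = 1 := by
    have h := exp_mul_exp_eq_exp_add (A := ℚ) 1 (-1)
    rwa [rescale_one, RingHom.id_apply, add_neg_cancel, rescale_zero_apply, constantCoeff_exp,
      map_one] at h
  linear_combination
    exp ℚ * eulerSeries_mul_exp_add_rescale_exp + hsq * eulerSeries - eulerSeries * hinv

lemma eulerE_add_sum_choose_mul_two_pow (n : ℕ) :
    eulerE n + ∑ j ∈ range (n + 1), (n.choose j : ℤ) * 2 ^ j * eulerE (n - j) = 2 := by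
  have h := congrArg (coeff n) rescale_two_exp_mul_eulerSeries_add
  rw [map_add, two_mul, map_add, exp_eq_mk, rescale_mk, eulerSeries, coeff_mk, coeff_mk] at h
  simp only [mul_one_div] at h
  rw [coeff_mk_div_factorial_mul] at h
  field_simp at h
  rw [add_comm]
  exact_mod_cast h

lemma choose_mul_eulerE_sub_eq_zero {n j : ℕ} (hn : Even n) (hj : Odd j) :
    (n.choose j : ℤ) * eulerE (n - j) = 0 := by
  rcases le_or_gt j n with h | h
  · rw [eulerE_of_odd (Nat.Even.sub_odd h hn hj), mul_zero]
  · rw [Nat.choose_eq_zero_of_lt h, Nat.cast_zero, zero_mul]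

/-- The terms of `2 f m + ∑ i ≥ 1, 4^i C(2m, 2i) f (m - i)` that can be nonzero modulo `2^9`. -/
def truncRec (f : ℕ → ℤ) (m : ℕ) : ℤ :=
  2 * f m + 4 * (2 * m).choose 2 * f (m - 1) + 16 * (2 * m).choose 4 * f (m - 2)
    + 64 * (2 * m).choose 6 * f (m - 3) + 256 * (2 * m).choose 8 * f (m - 4)

lemma truncRec_eulerE_modEq (m : ℕ) : truncRec (fun n => eulerE (2 * n)) m ≡ 2 [ZMOD 512] := by
  have hsum := eulerE_add_sum_choose_mul_two_pow (2 * m)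
  set g : ℕ → ℤ := fun j => ((2 * m).choose j : ℤ) * 2 ^ j * eulerE (2 * m - j) with hg
  -- padding with zero terms makes the sum split at `j = 9` for every `m`
  have hext : ∑ j ∈ range (2 * m + 1), g j = ∑ j ∈ range (9 + 2 * m), g j :=
    sum_subset (range_subset_range.2 (by omega)) fun j _ hj => by
      simp [hg, Nat.choose_eq_zero_of_lt (by simpa using hj : 2 * m < j)]
  have htail : (512 : ℤ) ∣ ∑ j ∈ range (2 * m), g (9 + j) :=
    dvd_sum fun j _ => ⟨((2 * m).choose (9 + j) : ℤ) * 2 ^ j * eulerE (2 * m - (9 + j)), by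
      simp only [hg, pow_add]; ring⟩
  have hodd {j : ℕ} (hj : Odd j) : g j = 0 := by
    simp only [hg, mul_right_comm _ (2 ^ j : ℤ),
      choose_mul_eulerE_sub_eq_zero (even_two_mul m) hj, zero_mul]
  rw [hext, sum_range_add] at hsum
  simp only [sum_range_succ, sum_range_zero, hodd (by decide : Odd 1), hodd (by decide : Odd 3),
    hodd (by decide : Odd 5), hodd (by decide : Odd 7)] at hsum
  obtain ⟨c, hc⟩ := htail
  rw [hc] at hsum
  refine Int.modEq_iff_dvd.2 ⟨c, ?_⟩
  simp only [truncRec, hg, Nat.mul_sub, Nat.reduceMul, Nat.choose_zero_right, Nat.sub_zero]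
    at hsum ⊢
  push_cast at hsum ⊢
  linear_combination -hsum

/-- Expanding `8 (-1)^m = 8 (1 - 2)^m` modulo `2^8` turns the closed form for `E (2m)` into this
polynomial, for which the recurrence becomes a polynomial identity. -/
def eulerPoly (m : ℕ) : ℤ := 1 - 2 * m + 8 * m.choose 2 - 80 * m.choose 3 + 128 * m.choose 4

lemma cast_choose_eq_prod_div (n k : ℕ) :
    (n.choose k : ℚ) = (∏ i ∈ range k, ((n : ℚ) - i)) / k ! := by
  rw [Nat.cast_choose_eq_descPochhammer_div, descPochhammer_eval_eq_prod_range]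

/- The coefficients are the iterated forward differences at `w = 0` of the degree-12 polynomial
`(truncRec eulerPoly (w + 4) - 2) / 512`. -/
lemma truncRec_eulerPoly_add_four (w : ℕ) :
    truncRec eulerPoly (w + 4) = 2 + 512 * (-6 - 339 * w - 7504 * w.choose 2
      - 127210 * w.choose 3 - 479410 * w.choose 4 + 2975269 * w.choose 5
      + 28633856 * w.choose 6 + 97840016 * w.choose 7 + 182883200 * w.choose 8
      + 204668160 * w.choose 9 + 137241600 * w.choose 10 + 51025920 * w.choose 11
      + 8110080 * w.choose 12) := by
  simp only [truncRec, eulerPoly, Nat.add_sub_cancel, Nat.reduceSubDiff]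
  qify
  simp only [cast_choose_eq_prod_div, prod_range_succ, prod_range_zero, Nat.factorial]
  push_cast
  ring

lemma truncRec_eulerPoly_modEq (m : ℕ) : truncRec eulerPoly m ≡ 2 [ZMOD 512] := by
  rcases lt_or_ge m 4 with hm | hm
  · interval_cases m <;> decide
  · obtain ⟨w, rfl⟩ := Nat.exists_eq_add_of_le' hm
    rw [truncRec_eulerPoly_add_four]
    exact Int.modEq_add_fac_self

lemma modEq_of_truncRec_modEq {f g : ℕ → ℤ} (hf : ∀ m, truncRec f m ≡ 2 [ZMOD 512])
    (hg : ∀ m, truncRec g m ≡ 2 [ZMOD 512]) (m : ℕ) : f m ≡ g m [ZMOD 256] := by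
  induction m using Nat.strong_induction_on with
  | _ m ih =>
  have hterm (i : ℕ) (hi : 0 < i) :
      (256 : ℤ) ∣ (2 * m).choose (2 * i) * (g (m - i) - f (m - i)) := by
    rcases Nat.eq_zero_or_pos m with rfl | hm
    · simp [Nat.choose_eq_zero_of_lt (by omega : 0 < 2 * i)]
    · exact Dvd.dvd.mul_left (ih (m - i) (by omega)).dvd _
  obtain ⟨c, hc⟩ := ((hf m).trans (hg m).symm).dvd
  obtain ⟨d₁, hd₁⟩ := hterm 1 one_pos
  obtain ⟨d₂, hd₂⟩ := hterm 2 two_pos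
  obtain ⟨d₃, hd₃⟩ := hterm 3 three_pos
  obtain ⟨d₄, hd₄⟩ := hterm 4 four_pos
  refine Int.modEq_iff_dvd.2 ⟨c - 2 * d₁ - 8 * d₂ - 32 * d₃ - 128 * d₄, ?_⟩
  refine mul_left_cancel₀ (two_ne_zero (α := ℤ)) ?_
  simp only [truncRec] at hc
  linear_combination hc - 4 * hd₁ - 16 * hd₂ - 64 * hd₃ - 256 * hd₄

lemma eulerE_two_mul_modEq_eulerPoly (m : ℕ) : eulerE (2 * m) ≡ eulerPoly m [ZMOD 256] :=
  modEq_of_truncRec_modEq truncRec_eulerE_modEq truncRec_eulerPoly_modEq m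

lemma eulerPoly_modEq (m : ℕ) :
    eulerPoly m ≡ -7 + 14 * m - 24 * m.choose 2 - 16 * m.choose 3 + 8 * (-1) ^ m [ZMOD 256] := by
  induction m with
  | zero => decide
  | succ m ih =>
    obtain ⟨d, hd⟩ := ih.dvd
    refine Int.modEq_iff_dvd.2 ⟨-d - m.choose 4, ?_⟩
    simp only [eulerPoly, Nat.choose_succ_succ', Nat.choose_one_right, pow_succ] at hd ⊢
    push_cast at hd ⊢
    linear_combination -hd

theorem stern_ext_m_eq_one_k_odd_general (b k : ℕ) (hb : Even b) (hko : Odd k) :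
    eulerE (2 * k + b) - eulerE b ≡
      2 * k * (-((b : ℤ) + 1) ^ 2 + 6 + 2 * k * (3 * b - 1 + 2 * k))
        - 16 * ((b : ℤ) + (-1) ^ (b / 2)) [ZMOD 2 ^ 8] := by
  obtain ⟨h, rfl⟩ := hb.two_dvd
  obtain ⟨t, rfl⟩ := hko
  have closedForm (m : ℕ) := (eulerE_two_mul_modEq_eulerPoly m).trans (eulerPoly_modEq m)
  rw [show 2 * (2 * t + 1) + 2 * h = 2 * (h + (2 * t + 1)) by ring,
    Nat.mul_div_cancel_left h two_pos, show (2 : ℤ) ^ 8 = 256 by norm_num]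
  refine ((closedForm _).sub (closedForm h)).trans
    (Int.modEq_iff_dvd.2 ⟨t + 3 * t.choose 2 + 2 * t.choose 3 + h * t + h * t.choose 2, ?_⟩)
  rw [pow_add, (odd_two_mul_add_one t).neg_one_pow]
  qify
  simp only [cast_choose_eq_prod_div, prod_range_succ, prod_range_zero, Nat.factorial]
  push_cast
  ring

theorem stern_ext_m_eq_one_k_odd (b k : ℕ) (hb : Even b) (hk : 0 < k) (hko : Odd k) :
    eulerE (2 * k + b) - eulerE b ≡
      2 * k * (-((b : ℤ) + 1) ^ 2 + 6 + 2 * k * (3 * b - 1 + 2 * k))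
        - 16 * ((b : ℤ) + (-1) ^ (b / 2)) [ZMOD 2 ^ 8] :=
  stern_ext_m_eq_one_k_odd_general b k hb hko
end

section
/- Let b be a nonnegative even integer and let k and m be positive integers with m ≥ 3. Then E_{2^m k + b} ≡ E_b + 5·2^m k (mod 2^{m+3}). -/
open Finset Polynomial

/-!
Write `e n = E (2 n)` and let `Δ` be the forward difference. The recurrence says that the
functional `p ↦ ∑ⱼ p.coeff j * Δʲ e 0` kills `P n = ∑ᵣ C(2n, 2r) (X + 1)ʳ` for `n ≥ 1`, where
`P n` is the even part of `(1 + Y) ^ (2 n)` written in `X = Y ^ 2 - 1`. Multiplying by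
`(1 + Y) ^ 2 = X + 2 + 2 Y` shows that `P n` lies in `(2, X) ^ n`, so its `j`-th coefficient is
divisible by `2 ^ (n - j)`; as `P n` is monic of degree `n`, induction gives `2 ^ j ∣ Δʲ e 0`,
hence `2 ^ l ∣ Δˡ e N` for every `N`. In the Newton expansion
`e (N + 2 ^ t) = ∑ₗ C(2 ^ t, l) Δˡ e N` the terms with `l ≥ 5` then vanish modulo `2 ^ (t + 4)`,
and the four remaining ones are determined modulo `2 ^ (t + 4)` by `Δʲ e 0 = -2, 8, -80, 1664,
-58112` for `j = 1, …, 5`. They add up to `e N + 10 · 2 ^ t`; iterating `k` times with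
`t = m - 1` gives the theorem.
-/

theorem sum_range_choose_succ_two_mul_smul {M : Type*} [AddCommMonoid M] (m : ℕ) (f : ℕ → M) :
    ∑ i ∈ range (m + 2), (m + 1).choose (2 * i) • f i =
      ∑ i ∈ range (m + 1), (m.choose (2 * i) • f i + m.choose (2 * i + 1) • f (i + 1)) := by
  have hshift : ∑ i ∈ range (m + 1), m.choose (2 * i + 2) • f (i + 1) + f 0 =
      ∑ i ∈ range (m + 1), m.choose (2 * i) • f i := by
    calc _ = ∑ i ∈ range (m + 2), m.choose (2 * i) • f i := by
          rw [sum_range_succ' (fun i => m.choose (2 * i) • f i)]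
          simp only [mul_add, mul_zero, mul_one, Nat.choose_zero_right, one_smul]
      _ = _ := by rw [sum_range_succ, Nat.choose_eq_zero_of_lt (by omega), zero_smul, add_zero]
  rw [sum_range_succ', sum_add_distrib, ← hshift]
  simp only [mul_add, mul_zero, mul_one, Nat.choose_succ_succ, add_smul, sum_add_distrib,
    Nat.choose_zero_right, one_smul]
  abel

theorem sum_range_choose_succ_two_mul_add_one_smul {M : Type*} [AddCommMonoid M] (m : ℕ)
    (f : ℕ → M) :
    ∑ i ∈ range (m + 2), (m + 1).choose (2 * i + 1) • f i =
      ∑ i ∈ range (m + 1), (m.choose (2 * i) + m.choose (2 * i + 1)) • f i := by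
  rw [sum_range_succ, Nat.choose_eq_zero_of_lt (by omega), zero_smul, add_zero]
  simp only [Nat.choose_succ_succ]

theorem dvd_choose_mul (n l : ℕ) : n ∣ n.choose l * l := by
  rcases n with _ | n
  · cases l <;> simp
  rcases l with _ | l
  · simp
  exact ⟨_, (Nat.add_one_mul_choose_eq n l).symm⟩

theorem two_pow_dvd_choose_two_pow_mul (t v : ℕ) {m : ℕ} (hm : Odd m) :
    2 ^ t ∣ (2 ^ t).choose (2 ^ v * m) * 2 ^ v :=
  ((Nat.coprime_two_left.2 hm).pow_left t).dvd_of_dvd_mul_right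
    (by simpa [mul_assoc] using dvd_choose_mul (2 ^ t) (2 ^ v * m))

theorem add_four_le_two_pow_mul {v m : ℕ} (h : 5 ≤ 2 ^ v * m) : v + 4 ≤ 2 ^ v * m := by
  match v with
  | 0 | 1 | 2 => omega
  | v + 3 =>
    have hm : 0 < m := Nat.pos_of_ne_zero (by rintro rfl; simp at h)
    have := Nat.lt_two_pow_self (n := v)
    rw [pow_add]
    nlinarith

theorem two_pow_add_four_dvd_choose_two_pow_mul_two_pow (t : ℕ) {l : ℕ} (hl : 5 ≤ l) :
    2 ^ (t + 4) ∣ (2 ^ t).choose l * 2 ^ l := by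
  obtain ⟨v, m, hm, rfl⟩ := Nat.exists_eq_two_pow_mul_odd (show l ≠ 0 by omega)
  rw [pow_add]
  refine (mul_dvd_mul_right (two_pow_dvd_choose_two_pow_mul t v hm) (2 ^ 4)).trans ?_
  rw [mul_assoc, ← pow_add]
  exact mul_dvd_mul_left _ (pow_dvd_pow 2 (add_four_le_two_pow_mul hl))

theorem two_mul_choose_two (n : ℕ) : (2 * n.choose 2 : ℤ) = n * (n - 1) := by
  rcases n with _ | n
  · simp
  have := congrArg (Nat.cast : ℕ → ℤ) (Nat.add_one_mul_choose_eq n 1)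
  push_cast [Nat.choose_one_right] at this ⊢
  linear_combination -this

/-- With `X = Y ^ 2 - 1`, `(1 + Y) ^ m = binomEvenPart m + Y * binomOddPart m`. -/
noncomputable def binomEvenPart (m : ℕ) : ℤ[X] :=
  ∑ i ∈ range (m + 1), m.choose (2 * i) • (X + 1) ^ i

noncomputable def binomOddPart (m : ℕ) : ℤ[X] :=
  ∑ i ∈ range (m + 1), m.choose (2 * i + 1) • (X + 1) ^ i

theorem binomEvenPart_succ (m : ℕ) :
    binomEvenPart (m + 1) = binomEvenPart m + (X + 1) * binomOddPart m := by
  rw [binomEvenPart, sum_range_choose_succ_two_mul_smul, sum_add_distrib, binomEvenPart,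
    binomOddPart, mul_sum]
  simp only [pow_succ, mul_smul_comm, mul_comm]

theorem binomOddPart_succ (m : ℕ) :
    binomOddPart (m + 1) = binomEvenPart m + binomOddPart m := by
  rw [binomOddPart, sum_range_choose_succ_two_mul_add_one_smul, binomEvenPart, binomOddPart,
    ← sum_add_distrib]
  simp only [add_smul]

theorem binomParts_two_mul_mem_span_two_X_pow (n : ℕ) :
    binomEvenPart (2 * n) ∈ Ideal.span {2, X} ^ n ∧
      binomOddPart (2 * n) ∈ Ideal.span {2, X} ^ n := by
  induction n with
  | zero => simp
  | succ n ih =>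
    have h2 : (2 : ℤ[X]) ∈ Ideal.span {2, X} := Ideal.subset_span (by simp)
    have hX2 : X + 2 ∈ Ideal.span {2, X} :=
      Ideal.add_mem _ (Ideal.subset_span (by simp)) h2
    have hEven : binomEvenPart (2 * n + 2) =
        (X + 2) * binomEvenPart (2 * n) + 2 * (X + 1) * binomOddPart (2 * n) := by
      rw [binomEvenPart_succ, binomEvenPart_succ, binomOddPart_succ]; ring
    have hOdd : binomOddPart (2 * n + 2) =
        2 * binomEvenPart (2 * n) + (X + 2) * binomOddPart (2 * n) := by
      rw [binomOddPart_succ, binomEvenPart_succ, binomOddPart_succ]; ring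
    rw [pow_succ', mul_add, hEven, hOdd]
    exact ⟨Ideal.add_mem _ (Ideal.mul_mem_mul hX2 ih.1)
        (Ideal.mul_mem_mul (Ideal.mul_mem_right _ _ h2) ih.2),
      Ideal.add_mem _ (Ideal.mul_mem_mul h2 ih.1) (Ideal.mul_mem_mul hX2 ih.2)⟩

theorem two_pow_dvd_coeff_of_mem_span_two_X_pow {n : ℕ} {p : ℤ[X]}
    (hp : p ∈ Ideal.span {2, X} ^ n) (j : ℕ) : (2 : ℤ) ^ (n - j) ∣ p.coeff j := by
  induction n generalizing p j with
  | zero => simp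
  | succ n ih =>
    rw [pow_succ'] at hp
    refine Submodule.mul_induction_on hp (fun a ha q hq => ?_) (fun x y hx hy => ?_)
    · obtain ⟨u, v, rfl⟩ := Ideal.mem_span_pair.1 ha
      rw [show (u * 2 + v * X) * q = C 2 * (u * q) + X * (v * q) by rw [C_ofNat]; ring,
        coeff_add, coeff_C_mul]
      refine dvd_add ?_ ?_
      · refine (pow_dvd_pow 2 (by omega : n + 1 - j ≤ n - j + 1)).trans ?_
        rw [pow_succ']
        exact mul_dvd_mul_left 2 (ih (Ideal.mul_mem_left _ u hq) j)
      · cases j with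
        | zero => simp
        | succ j => simpa using ih (Ideal.mul_mem_left _ v hq) j
    · rw [coeff_add]; exact dvd_add hx hy

theorem coeff_binomEvenPart (m j : ℕ) :
    (binomEvenPart m).coeff j = ∑ i ∈ range (m + 1), (m.choose (2 * i) * i.choose j : ℤ) := by
  simp [binomEvenPart, coeff_X_add_one_pow]

theorem coeff_binomEvenPart_two_mul_of_le {n j : ℕ} (h : n ≤ j) :
    (binomEvenPart (2 * n)).coeff j = n.choose j := by
  rw [coeff_binomEvenPart, sum_eq_single n]
  · simp
  · intro i _ hi
    rcases lt_or_gt_of_ne hi with hi | hi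
    · rw [Nat.choose_eq_zero_of_lt (hi.trans_le h)]; simp
    · rw [Nat.choose_eq_zero_of_lt (show 2 * n < 2 * i by omega)]; simp
  · exact fun h => absurd (mem_range.2 (by omega)) h

theorem shift_eq_sum_range_fwdDiff_iter {M G : Type*} [AddCommMonoid M] [AddCommGroup G] (h : M)
    (f : M → G) (y : M) {n K : ℕ} (hn : n < K) :
    f (y + n • h) = ∑ k ∈ range K, n.choose k • (fwdDiff h)^[k] f y := by
  rw [shift_eq_sum_fwdDiff_iter h f n y]
  refine sum_subset (range_subset_range.2 hn) fun k _ hk => ?_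
  rw [Nat.choose_eq_zero_of_lt (by simpa using hk), zero_smul]

theorem sum_coeff_binomEvenPart_mul_fwdDiff_iter (m : ℕ) (f : ℕ → ℤ) :
    ∑ j ∈ range (m + 1), (binomEvenPart m).coeff j * (fwdDiff 1)^[j] f 0 =
      ∑ i ∈ range (m + 1), (m.choose (2 * i) : ℤ) * f i := by
  have hnewton : ∀ i ∈ range (m + 1),
      f i = ∑ j ∈ range (m + 1), (i.choose j : ℤ) * (fwdDiff 1)^[j] f 0 := fun i hi => by
    simpa using shift_eq_sum_range_fwdDiff_iter 1 f 0 (mem_range.1 hi)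
  calc _ = ∑ i ∈ range (m + 1), (m.choose (2 * i) : ℤ) *
        ∑ j ∈ range (m + 1), (i.choose j : ℤ) * (fwdDiff 1)^[j] f 0 := by
        simp only [coeff_binomEvenPart, sum_mul, mul_sum, mul_assoc]
        exact sum_comm
    _ = _ := sum_congr rfl fun i hi => by rw [← hnewton i hi]

theorem two_pow_dvd_fwdDiff_iter_zero {f : ℕ → ℤ}
    (hf : ∀ n, 0 < n → ∑ i ∈ range (2 * n + 1), ((2 * n).choose (2 * i) : ℤ) * f i = 0)
    (n : ℕ) : 2 ^ n ∣ (fwdDiff 1)^[n] f 0 := by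
  induction n using Nat.strong_induction_on with
  | _ n ih =>
    rcases Nat.eq_zero_or_pos n with rfl | hn
    · simp
    have hsum := sum_coeff_binomEvenPart_mul_fwdDiff_iter (2 * n) f
    rw [hf n hn, ← add_sum_erase _ _ (mem_range.2 (show n < 2 * n + 1 by omega)),
      coeff_binomEvenPart_two_mul_of_le le_rfl, Nat.choose_self, Nat.cast_one, one_mul] at hsum
    rw [eq_neg_of_add_eq_zero_left hsum, dvd_neg]
    refine dvd_sum fun j hj => ?_
    rcases lt_or_gt_of_ne (ne_of_mem_erase hj) with hj | hj
    · rw [show (2 : ℤ) ^ n = 2 ^ (n - j) * 2 ^ j by rw [← pow_add]; congr 1; omega]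
      exact mul_dvd_mul (two_pow_dvd_coeff_of_mem_span_two_X_pow
        (binomParts_two_mul_mem_span_two_X_pow n).1 j) (ih j hj)
    · rw [coeff_binomEvenPart_two_mul_of_le hj.le, Nat.choose_eq_zero_of_lt hj]; simp

theorem fwdDiff_iter_modEq_sum_range {f : ℕ → ℤ} (hf : ∀ j, 2 ^ j ∣ (fwdDiff 1)^[j] f 0)
    (l r N : ℕ) :
    (fwdDiff 1)^[l] f N ≡ ∑ i ∈ range r, (N.choose i : ℤ) * (fwdDiff 1)^[l + i] f 0
      [ZMOD 2 ^ (l + r)] := by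
  have hnewton := shift_eq_sum_range_fwdDiff_iter 1 ((fwdDiff 1)^[l] f) 0
    (show N < r + (N + 1) by omega)
  rw [sum_range_add] at hnewton
  simp only [zero_add, smul_eq_mul, mul_one, nsmul_eq_mul, ← Function.iterate_add_apply] at hnewton
  rw [hnewton]
  calc _ ≡ ∑ i ∈ range r, (N.choose i : ℤ) * (fwdDiff 1)^[i + l] f 0 + 0 [ZMOD 2 ^ (l + r)] :=
        Int.ModEq.add_left _ <| Int.modEq_zero_iff_dvd.2 <| dvd_sum fun i _ =>
          ((pow_dvd_pow 2 (by omega)).trans (hf _)).mul_left _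
    _ = _ := by simp only [add_zero, add_comm _ l]

theorem two_pow_dvd_fwdDiff_iter {f : ℕ → ℤ} (hf : ∀ j, 2 ^ j ∣ (fwdDiff 1)^[j] f 0)
    (l N : ℕ) : 2 ^ l ∣ (fwdDiff 1)^[l] f N := by
  simpa [Int.modEq_zero_iff_dvd] using fwdDiff_iter_modEq_sum_range hf l 0 N

def evenEulerE (n : ℕ) : ℤ := eulerE (2 * n)

theorem evenEulerE_succ (n : ℕ) :
    evenEulerE (n + 1) =
      -∑ i ∈ range (n + 1), ((2 * n + 2).choose (2 * i) : ℤ) * evenEulerE i := by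
  rw [evenEulerE, mul_add, mul_one, eulerE, if_pos (even_two_mul n),
    Nat.mul_div_cancel_left _ two_pos,
    sum_attach (range (n + 1)) (fun i => ((2 * n + 2).choose (2 * i) : ℤ) * eulerE (2 * i))]
  rfl

theorem sum_range_choose_two_mul_evenEulerE {n : ℕ} (hn : 0 < n) :
    ∑ i ∈ range (2 * n + 1), ((2 * n).choose (2 * i) : ℤ) * evenEulerE i = 0 := by
  obtain ⟨n, rfl⟩ : ∃ n', n = n' + 1 := ⟨n - 1, by omega⟩
  rw [← sum_subset (range_subset_range.2 (show n + 2 ≤ 2 * (n + 1) + 1 by omega)),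
    sum_range_succ, evenEulerE_succ]
  · simp [mul_add]
  · intro i _ hi
    rw [Nat.choose_eq_zero_of_lt (by simp only [mem_range, not_lt] at hi; omega), Nat.cast_zero,
      zero_mul]

theorem two_pow_dvd_fwdDiff_iter_evenEulerE_zero (n : ℕ) :
    2 ^ n ∣ (fwdDiff 1)^[n] evenEulerE 0 :=
  two_pow_dvd_fwdDiff_iter_zero (fun _ => sum_range_choose_two_mul_evenEulerE) n

theorem fwdDiff_iter_evenEulerE_zero :
    (fwdDiff 1)^[1] evenEulerE 0 = -2 ∧ (fwdDiff 1)^[2] evenEulerE 0 = 8 ∧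
      (fwdDiff 1)^[3] evenEulerE 0 = -80 ∧ (fwdDiff 1)^[4] evenEulerE 0 = 1664 ∧
      (fwdDiff 1)^[5] evenEulerE 0 = -58112 := by
  have e0 : evenEulerE 0 = 1 := by simp [evenEulerE, eulerE]
  have e1 : evenEulerE 1 = -1 := by simp [evenEulerE_succ 0, e0]
  have e2 : evenEulerE 2 = 5 := by simp [evenEulerE_succ 1, sum_range_succ, e0, e1, Nat.choose]
  have e3 : evenEulerE 3 = -61 := by
    simp [evenEulerE_succ 2, sum_range_succ, e0, e1, e2, Nat.choose]
  have e4 : evenEulerE 4 = 1385 := by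
    simp [evenEulerE_succ 3, sum_range_succ, e0, e1, e2, e3, Nat.choose]
  have e5 : evenEulerE 5 = -50521 := by
    simp [evenEulerE_succ 4, sum_range_succ, e0, e1, e2, e3, e4, Nat.choose]
  simp [fwdDiff, fwdDiff_iter_eq_sum_shift, sum_range_succ, e0, e1, e2, e3, e4, e5, Nat.choose]

theorem fwdDiff_iter_evenEulerE_modEq (N : ℕ) :
    (fwdDiff 1)^[1] evenEulerE N ≡ 8 * N - 2 [ZMOD 16] ∧
      (fwdDiff 1)^[2] evenEulerE N ≡ 16 * N + 8 [ZMOD 32] ∧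
      16 ∣ (fwdDiff 1)^[3] evenEulerE N ∧ 64 ∣ (fwdDiff 1)^[4] evenEulerE N := by
  have hdvd := two_pow_dvd_fwdDiff_iter_evenEulerE_zero
  obtain ⟨A1, A2, A3, A4, A5⟩ := fwdDiff_iter_evenEulerE_zero
  have hD1 := fwdDiff_iter_modEq_sum_range hdvd 1 3 N
  have hD2 := fwdDiff_iter_modEq_sum_range hdvd 2 3 N
  have hD3 := fwdDiff_iter_modEq_sum_range hdvd 3 1 N
  have hD4 := fwdDiff_iter_modEq_sum_range hdvd 4 2 N
  simp only [sum_range_succ, sum_range_zero, A1, A2, A3, A4, A5, Nat.choose_zero_right,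
    Nat.choose_one_right, Nat.cast_one] at hD1 hD2 hD3 hD4
  refine ⟨hD1.trans (Int.modEq_iff_dvd.2 ⟨5 * N.choose 2, by ring⟩),
    hD2.trans (Int.modEq_iff_dvd.2 ⟨3 * N - 52 * N.choose 2, by ring⟩),
    Int.modEq_zero_iff_dvd.1 (hD3.trans (Int.modEq_iff_dvd.2 ⟨5, by ring⟩)),
    Int.modEq_zero_iff_dvd.1 (hD4.trans (Int.modEq_iff_dvd.2 ⟨908 * N - 26, by ring⟩))⟩

theorem modEq_sum_range_five_fwdDiff_iter {f : ℕ → ℤ} (hf : ∀ j, 2 ^ j ∣ (fwdDiff 1)^[j] f 0)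
    {t : ℕ} (ht : 2 ≤ t) (N : ℕ) :
    f (N + 2 ^ t) ≡ ∑ l ∈ range 5, ((2 ^ t).choose l : ℤ) * (fwdDiff 1)^[l] f N
      [ZMOD 2 ^ (t + 4)] := by
  have h4 : 2 ^ 2 ≤ 2 ^ t := Nat.pow_le_pow_right two_pos ht
  have hnewton := shift_eq_sum_fwdDiff_iter 1 f (2 ^ t) N
  rw [show 2 ^ t + 1 = 5 + (2 ^ t - 4) by omega, sum_range_add] at hnewton
  simp only [smul_eq_mul, mul_one, nsmul_eq_mul] at hnewton
  rw [hnewton]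
  conv_rhs => rw [← add_zero (∑ l ∈ range 5, _)]
  refine Int.ModEq.add_left _ (Int.modEq_zero_iff_dvd.2 (dvd_sum fun x _ => ?_))
  obtain ⟨k, hk⟩ := two_pow_dvd_fwdDiff_iter hf (5 + x) N
  have := Int.natCast_dvd_natCast.2 (two_pow_add_four_dvd_choose_two_pow_mul_two_pow t
    (show 5 ≤ 5 + x by omega))
  push_cast at this
  rw [hk, ← mul_assoc]
  exact this.mul_right k

theorem evenEulerE_add_two_pow_modEq {t : ℕ} (ht : 2 ≤ t) (N : ℕ) :
    evenEulerE (N + 2 ^ t) ≡ evenEulerE N + 10 * 2 ^ t [ZMOD 2 ^ (t + 4)] := by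
  refine (modEq_sum_range_five_fwdDiff_iter two_pow_dvd_fwdDiff_iter_evenEulerE_zero ht N).trans
    ?_
  obtain ⟨hD1, hD2, ⟨c, hc⟩, ⟨d, hd⟩⟩ := fwdDiff_iter_evenEulerE_modEq N
  obtain ⟨a, ha⟩ := hD1.symm.dvd
  obtain ⟨b, hb⟩ := hD2.symm.dvd
  obtain ⟨y, hy⟩ := two_pow_dvd_choose_two_pow_mul t 0 (by decide : Odd 3)
  obtain ⟨w, hw⟩ := two_pow_dvd_choose_two_pow_mul t 2 (by decide : Odd 1)
  have hy' : ((2 ^ t).choose 3 : ℤ) = 2 ^ t * y := by exact_mod_cast (by simpa using hy)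
  have hw' : ((2 ^ t).choose 4 : ℤ) * 4 = 2 ^ t * w := by exact_mod_cast (by simpa using hw)
  have hC2 := two_mul_choose_two (2 ^ t)
  push_cast at hC2
  obtain ⟨p, hp⟩ : ∃ p : ℤ, (2 : ℤ) ^ t = 4 * p := ⟨2 ^ (t - 2), by
    rw [show (4 : ℤ) = 2 ^ 2 by norm_num, ← pow_add]; congr 1; omega⟩
  rw [hp] at hy' hw' hC2
  rw [show (2 : ℤ) ^ (t + 4) = 64 * p by rw [pow_add, hp]; ring]
  simp only [sum_range_succ, sum_range_zero, Nat.choose_zero_right, Nat.choose_one_right,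
    Function.iterate_zero, id, Nat.cast_one, Nat.cast_pow, Nat.cast_ofNat, hp]
  -- the head is `4p(8N - 2) + 2p(4p - 1)(16N + 8) ≡ -24p ≡ 40p` modulo `64p`, where `2 ^ t = 4p`
  refine Int.modEq_iff_dvd.2 ⟨1 - a - p * (1 + 2 * N + 4 * b) + b - y * c - w * d, ?_⟩
  linear_combination -4 * p * ha - ((2 ^ t).choose 2 : ℤ) * hb
    - ((2 ^ t).choose 3 : ℤ) * hc - ((2 ^ t).choose 4 : ℤ) * hd - (4 + 8 * N + 16 * b) * hC2
    - 16 * c * hy' - 16 * d * hw'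

theorem evenEulerE_add_two_pow_mul_modEq {t : ℕ} (ht : 2 ≤ t) (N k : ℕ) :
    evenEulerE (N + 2 ^ t * k) ≡ evenEulerE N + 10 * 2 ^ t * k [ZMOD 2 ^ (t + 4)] := by
  induction k with
  | zero => simp
  | succ k ih =>
    calc evenEulerE (N + 2 ^ t * (k + 1))
        = evenEulerE (N + 2 ^ t * k + 2 ^ t) := by rw [mul_add_one, add_assoc]
      _ ≡ evenEulerE (N + 2 ^ t * k) + 10 * 2 ^ t [ZMOD 2 ^ (t + 4)] :=
        evenEulerE_add_two_pow_modEq ht _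
      _ ≡ evenEulerE N + 10 * 2 ^ t * k + 10 * 2 ^ t [ZMOD 2 ^ (t + 4)] := ih.add_right _
      _ = evenEulerE N + 10 * 2 ^ t * (k + 1) := by ring

theorem stern_congruence_m_ge_three_general (b k m : ℕ) (hb : Even b) (hm : 3 ≤ m) :
    eulerE (2 ^ m * k + b) ≡ eulerE b + 5 * 2 ^ m * k [ZMOD 2 ^ (m + 3)] := by
  obtain ⟨N, rfl⟩ := hb
  obtain ⟨t, rfl⟩ : ∃ t, m = t + 1 := ⟨m - 1, by omega⟩
  have h := evenEulerE_add_two_pow_mul_modEq (show 2 ≤ t by omega) N k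
  rw [evenEulerE, evenEulerE] at h
  rwa [show 2 ^ (t + 1) * k + (N + N) = 2 * (N + 2 ^ t * k) by ring, ← two_mul,
    show (5 : ℤ) * 2 ^ (t + 1) * k = 10 * 2 ^ t * k by ring]

theorem stern_congruence_m_ge_three (b k m : ℕ) (hb : Even b) (hk : 0 < k) (hm : 3 ≤ m) :
    eulerE (2 ^ m * k + b) ≡ eulerE b + 5 * 2 ^ m * k [ZMOD 2 ^ (m + 3)] :=
  stern_congruence_m_ge_three_general b k m hb hm
end

section
/- Let b be a nonnegative even integer and let k and m be positive integers with m ≥ 4. Then E_{2^m k + b} ≡ E_b + 5·2^m k (mod 2^{m+4}) if b ≡ 0 or 6 (mod 8), and E_{2^m k + b} ≡ E_b - 3·2^m k (mod 2^{m+4}) if b ≡ 2 or 4 (mod 8). -/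
/-!
Write `a j` (`eulerDiff j`) for the `j`-th forward difference at `0` of `n ↦ E_{2n}`, so that
`E_{2n} = ∑_j C(n, j) a j`. The defining recurrence then reads `∑_{i ≤ j} G(2j, i) a i = 0`, where
`G(n, i) = ∑_r C(n, 2r) C(r, i)` (`evenChooseSum`) and `G(2j, j) = 1`. Since `G(n, i)` is the
coefficient of `X ^ i` in `(u ^ n + v ^ n) / 2` for the roots `u, v = 1 ± √(1 + X)` of
`t ^ 2 = 2t + X`, it satisfies `G(n + 2, i) = 2 G(n + 1, i) + G(n, i - 1)`, so `2 ^ (n - 2i - 1)`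
divides it. With the values of `a j` for `j ≤ 5` this gives `2 ^ (j + 3) ∣ a j` for `j ≥ 4`.

For `T = 2 ^ (m - 1) k`, `E_{2(n + T)} - E_{2n} = ∑_j (C(n + T, j) - C(n, j)) a j`. For `j ≥ 4`,
Vandermonde expands the bracket into multiples of `C(T, s)`, `1 ≤ s ≤ j`, and `T ∣ s C(T, s)`; as
the 2-adic valuation `v` of `s` satisfies `v + 2 ≤ j`, these terms vanish modulo `2 ^ (m + 4)`. The
terms `j ≤ 3` form a cubic in `T` whose linear coefficient depends modulo `32` only on `n mod 4`,
which produces the constants `5` and `-3`.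
-/

open Finset fwdDiff

lemma pow_dvd_mul_of_le {M : Type*} [CommMonoid M] {a x y : M} {α β n : ℕ} (hx : a ^ α ∣ x)
    (hy : a ^ β ∣ y) (h : n ≤ α + β) : a ^ n ∣ x * y :=
  (pow_dvd_pow a h).trans (pow_add a α β ▸ mul_dvd_mul hx hy)

lemma choose_add_two_add_choose (n k : ℕ) :
    (n + 2).choose (k + 2) + n.choose (k + 2) = 2 * (n + 1).choose (k + 2) + n.choose k := by
  simp only [Nat.choose_succ_succ']
  ring

lemma dvd_mul_choose (T : ℕ) {s : ℕ} (hs : 0 < s) : T ∣ s * T.choose s := by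
  obtain ⟨s, rfl⟩ := Nat.exists_eq_add_of_lt hs
  cases T with
  | zero => simp
  | succ t => exact ⟨t.choose s, by rw [zero_add, mul_comm, ← Nat.add_one_mul_choose_eq]⟩

lemma two_pow_dvd_two_pow_mul_choose {p v u T : ℕ} (hu : Odd u) (hT : 2 ^ p ∣ T) :
    2 ^ p ∣ 2 ^ v * T.choose (2 ^ v * u) := by
  have hs : 0 < 2 ^ v * u := Nat.mul_pos (by positivity) hu.pos
  have hcop : Nat.Coprime (2 ^ p) u := Nat.Coprime.pow_left p (Nat.coprime_two_left.2 hu)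
  refine hcop.dvd_of_dvd_mul_left ?_
  rw [← mul_assoc, mul_comm u]
  exact hT.trans (dvd_mul_choose T hs)

lemma add_two_le_of_two_pow_le {v j : ℕ} (hj : 4 ≤ j) (h : 2 ^ v ≤ j) : v + 2 ≤ j := by
  rcases le_or_gt v 2 with hv | hv
  · omega
  · have := Nat.lt_two_pow_self (n := v - 1)
    rw [show v = v - 1 + 1 by omega, pow_succ] at h
    omega

lemma two_mul_choose_two_s14 (x : ℕ) : 2 * (x.choose 2 : ℤ) = x * (x - 1) := by
  rw [← Nat.cast_descFactorial_two, Nat.descFactorial_eq_factorial_mul_choose]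
  push_cast
  ring

lemma six_mul_choose_three (x : ℕ) : 6 * (x.choose 3 : ℤ) = x * (x - 1) * (x - 2) := by
  induction x with
  | zero => simp
  | succ x ih =>
    rw [Nat.choose_succ_succ', Nat.cast_add, mul_add, ih]
    push_cast
    linear_combination 3 * two_mul_choose_two_s14 x

lemma eulerE_two_mul_add_two (n : ℕ) :
    eulerE (2 * n + 2) =
      -∑ r ∈ range (n + 1), ((2 * n + 2).choose (2 * r) : ℤ) * eulerE (2 * r) := by
  rw [eulerE, if_pos (even_two_mul n), Nat.mul_div_cancel_left n two_pos,
    sum_attach (range (n + 1)) fun r ↦ ((2 * n + 2).choose (2 * r) : ℤ) * eulerE (2 * r)]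

lemma sum_choose_mul_eulerE_eq_zero {n : ℕ} (hn : 0 < n) :
    ∑ r ∈ range (n + 1), ((2 * n).choose (2 * r) : ℤ) * eulerE (2 * r) = 0 := by
  obtain ⟨n, rfl⟩ := Nat.exists_eq_add_of_lt hn
  rw [sum_range_succ, Nat.choose_self, Nat.cast_one, one_mul,
    show 2 * (0 + n + 1) = 2 * n + 2 by ring, eulerE_two_mul_add_two]
  simp

def eulerDiff (j : ℕ) : ℤ := (Δ_[1])^[j] (fun n ↦ eulerE (2 * n)) 0

lemma eulerE_two_mul_eq_sum {n N : ℕ} (hn : n < N) :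
    eulerE (2 * n) = ∑ j ∈ range N, (n.choose j : ℤ) * eulerDiff j := by
  have h := shift_eq_sum_fwdDiff_iter 1 (fun n ↦ eulerE (2 * n)) n 0
  simp only [zero_add, smul_eq_mul, mul_one, nsmul_eq_mul] at h
  rw [h]
  refine sum_subset (range_subset_range.2 hn) fun j _ hj ↦ ?_
  rw [Nat.choose_eq_zero_of_lt (by simpa using hj), Nat.cast_zero, zero_mul]

lemma eulerDiff_values : eulerDiff 0 = 1 ∧ eulerDiff 1 = -2 ∧ eulerDiff 2 = 8 ∧
    eulerDiff 3 = -80 ∧ eulerDiff 4 = 1664 ∧ eulerDiff 5 = -58112 := by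
  have e0 : eulerE 0 = 1 := by rw [eulerE]
  have e2 : eulerE 2 = -1 := by simpa [e0] using eulerE_two_mul_add_two 0
  have e4 : eulerE 4 = 5 := by
    simpa [e0, e2, sum_range_succ, Nat.choose] using eulerE_two_mul_add_two 1
  have e6 : eulerE 6 = -61 := by
    simpa [e0, e2, e4, sum_range_succ, Nat.choose] using eulerE_two_mul_add_two 2
  have e8 : eulerE 8 = 1385 := by
    simpa [e0, e2, e4, e6, sum_range_succ, Nat.choose] using eulerE_two_mul_add_two 3
  have e10 : eulerE 10 = -50521 := by
    simpa [e0, e2, e4, e6, e8, sum_range_succ, Nat.choose] using eulerE_two_mul_add_two 4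
  simp only [eulerDiff, fwdDiff_iter_eq_sum_shift]
  simp [sum_range_succ, e0, e2, e4, e6, e8, e10, Nat.choose]

def evenChooseSum (n i : ℕ) : ℕ := ∑ r ∈ range (n + 1), n.choose (2 * r) * r.choose i

lemma evenChooseSum_eq_sum_range {n N : ℕ} (i : ℕ) (hN : n < 2 * N) :
    evenChooseSum n i = ∑ r ∈ range N, n.choose (2 * r) * r.choose i := by
  rcases le_or_gt N (n + 1) with h | h
  · refine (sum_subset (range_subset_range.2 h) fun r hr hrN ↦ ?_).symm
    simp only [mem_range, not_lt] at hr hrN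
    rw [Nat.choose_eq_zero_of_lt (by omega), zero_mul]
  · refine sum_subset (range_subset_range.2 h.le) fun r _ hr ↦ ?_
    simp only [mem_range, not_lt] at hr
    rw [Nat.choose_eq_zero_of_lt (by omega), zero_mul]

lemma evenChooseSum_add_two (n i : ℕ) :
    evenChooseSum (n + 2) i + evenChooseSum n i =
      2 * evenChooseSum (n + 1) i + ∑ r ∈ range (n + 1), n.choose (2 * r) * (r + 1).choose i := by
  have hshift (r : ℕ) :
      ((n + 2).choose (2 * (r + 1)) + n.choose (2 * (r + 1))) * (r + 1).choose i =
        2 * ((n + 1).choose (2 * (r + 1)) * (r + 1).choose i) +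
          n.choose (2 * r) * (r + 1).choose i := by
    rw [show 2 * (r + 1) = 2 * r + 2 by ring, choose_add_two_add_choose]
    ring
  rw [evenChooseSum_eq_sum_range i (by omega : n < 2 * (n + 2 + 1)),
    evenChooseSum_eq_sum_range i (by omega : n + 1 < 2 * (n + 2 + 1)), evenChooseSum,
    ← sum_add_distrib, sum_range_succ' _ (n + 2), sum_range_succ' _ (n + 2)]
  simp only [← add_mul, hshift, sum_add_distrib, ← mul_sum]
  rw [sum_range_succ fun r ↦ n.choose (2 * r) * (r + 1).choose i,
    Nat.choose_eq_zero_of_lt (by omega : n < 2 * (n + 1))]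
  simp only [Nat.choose_zero_right, zero_mul, mul_zero, add_zero]
  ring

lemma evenChooseSum_add_two_zero (n : ℕ) :
    evenChooseSum (n + 2) 0 = 2 * evenChooseSum (n + 1) 0 := by
  have h := evenChooseSum_add_two n 0
  have h' : ∑ r ∈ range (n + 1), n.choose (2 * r) * (r + 1).choose 0 = evenChooseSum n 0 := by
    simp [evenChooseSum]
  omega

lemma evenChooseSum_add_two_succ (n i : ℕ) :
    evenChooseSum (n + 2) (i + 1) = 2 * evenChooseSum (n + 1) (i + 1) + evenChooseSum n i := by
  have h := evenChooseSum_add_two n (i + 1)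
  have h' : ∑ r ∈ range (n + 1), n.choose (2 * r) * (r + 1).choose (i + 1) =
      evenChooseSum n i + evenChooseSum n (i + 1) := by
    simp only [evenChooseSum, Nat.choose_succ_succ', mul_add, sum_add_distrib]
  omega

lemma two_pow_dvd_evenChooseSum (n i : ℕ) : 2 ^ (n - 2 * i - 1) ∣ evenChooseSum n i := by
  induction n using Nat.twoStepInduction generalizing i with
  | zero => simp
  | one => simp
  | more n ih ih' =>
    have two : 2 ^ 1 ∣ 2 := dvd_rfl
    cases i with
    | zero =>
      rw [evenChooseSum_add_two_zero]
      exact pow_dvd_mul_of_le two (ih' 0) (by omega)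
    | succ i =>
      rw [evenChooseSum_add_two_succ]
      exact dvd_add (pow_dvd_mul_of_le two (ih' (i + 1)) (by omega))
        ((pow_dvd_pow 2 (by omega)).trans (ih i))

lemma evenChooseSum_two_mul_self (j : ℕ) : evenChooseSum (2 * j) j = 1 := by
  rw [evenChooseSum, sum_eq_single_of_mem j (mem_range.2 (by omega))]
  · simp
  · intro r hr hrj
    rcases lt_or_gt_of_ne hrj with h | h
    · rw [Nat.choose_eq_zero_of_lt h, mul_zero]
    · rw [Nat.choose_eq_zero_of_lt (by omega), zero_mul]

lemma eulerDiff_eq_neg_sum {j : ℕ} (hj : 0 < j) :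
    eulerDiff j = -∑ i ∈ range j, (evenChooseSum (2 * j) i : ℤ) * eulerDiff i := by
  have h := sum_choose_mul_eulerE_eq_zero hj
  have hswap : ∑ r ∈ range (j + 1), ((2 * j).choose (2 * r) : ℤ) * eulerE (2 * r) =
      ∑ i ∈ range (j + 1), (evenChooseSum (2 * j) i : ℤ) * eulerDiff i := by
    rw [sum_congr rfl fun r hr ↦ by rw [eulerE_two_mul_eq_sum (N := j + 1) (mem_range.1 hr)]]
    simp only [mul_sum, evenChooseSum_eq_sum_range _ (by omega : 2 * j < 2 * (j + 1))]
    rw [sum_comm]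
    push_cast
    simp only [sum_mul, mul_assoc]
  rw [hswap, sum_range_succ, evenChooseSum_two_mul_self, Nat.cast_one, one_mul] at h
  linarith

lemma two_pow_dvd_eulerDiff {j : ℕ} (hj : 4 ≤ j) : (2 : ℤ) ^ (j + 3) ∣ eulerDiff j := by
  obtain ⟨a0, a1, a2, a3, a4, a5⟩ := eulerDiff_values
  induction j using Nat.strong_induction_on with
  | _ j ih =>
  rcases (by omega : j = 4 ∨ j = 5 ∨ 6 ≤ j) with rfl | rfl | hj6
  · rw [a4]; norm_num
  · rw [a5]; norm_num
  rw [eulerDiff_eq_neg_sum (by omega), dvd_neg]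
  refine dvd_sum fun i hi ↦ ?_
  have hG : (2 : ℤ) ^ (2 * j - 2 * i - 1) ∣ evenChooseSum (2 * j) i := by
    exact_mod_cast two_pow_dvd_evenChooseSum (2 * j) i
  have hi := mem_range.1 hi
  rcases lt_or_ge i 4 with hi4 | hi4
  · interval_cases i
    · rw [a0, mul_one]; exact (pow_dvd_pow 2 (by omega)).trans hG
    · exact pow_dvd_mul_of_le hG (β := 1) (by rw [a1]; norm_num) (by omega)
    · exact pow_dvd_mul_of_le hG (β := 3) (by rw [a2]; norm_num) (by omega)
    · exact pow_dvd_mul_of_le hG (β := 4) (by rw [a3]; norm_num) (by omega)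
  · exact pow_dvd_mul_of_le hG (ih i hi hi4) (by omega)

lemma two_pow_dvd_choose_mul_eulerDiff {p T s j : ℕ} (hT : 2 ^ p ∣ T) (hs : 0 < s) (hsj : s ≤ j)
    (hj : 4 ≤ j) : (2 : ℤ) ^ (p + 5) ∣ T.choose s * eulerDiff j := by
  obtain ⟨v, u, hu, rfl⟩ := Nat.exists_eq_two_pow_mul_odd hs.ne'
  have hv : v + 2 ≤ j :=
    add_two_le_of_two_pow_le hj ((Nat.le_mul_of_pos_right _ hu.pos).trans hsj)
  have hchoose : (2 : ℤ) ^ p ∣ 2 ^ v * T.choose (2 ^ v * u) := by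
    exact_mod_cast two_pow_dvd_two_pow_mul_choose (v := v) hu hT
  have h := pow_dvd_mul_of_le (n := v + (p + 5)) hchoose (two_pow_dvd_eulerDiff hj) (by omega)
  rw [pow_add, mul_assoc] at h
  exact (mul_dvd_mul_iff_left (by positivity)).1 h

lemma two_pow_dvd_choose_add_sub_choose_mul_eulerDiff {p T j : ℕ} (n : ℕ) (hT : 2 ^ p ∣ T)
    (hj : 4 ≤ j) :
    (2 : ℤ) ^ (p + 5) ∣ (((n + T).choose j : ℤ) - n.choose j) * eulerDiff j := by
  have hvdm : ((n + T).choose j : ℤ) - n.choose j =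
      ∑ s ∈ range j, (T.choose (s + 1) : ℤ) * n.choose (j - (s + 1)) := by
    rw [add_comm n, Nat.add_choose_eq, Nat.sum_antidiagonal_eq_sum_range_succ_mk, Nat.cast_sum,
      sum_range_succ']
    simp
  rw [hvdm, sum_mul]
  refine dvd_sum fun s hs ↦ ?_
  rw [mul_right_comm]
  exact (two_pow_dvd_choose_mul_eulerDiff hT s.succ_pos (by simpa using hs) hj).mul_right _

lemma three_mul_sum_range_four (n T : ℕ) :
    3 * ∑ j ∈ range 4, (((n + T).choose j : ℤ) - n.choose j) * eulerDiff j =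
      T * (-98 + 264 * n - 120 * n ^ 2) + 4 * T ^ 2 * (33 - 30 * n) - 40 * T ^ 3 := by
  obtain ⟨-, a1, a2, a3, -⟩ := eulerDiff_values
  simp only [sum_range_succ, range_zero, sum_empty, Nat.choose_zero_right, Nat.choose_one_right,
    a1, a2, a3]
  have h2 := two_mul_choose_two_s14 (n + T)
  have h3 := six_mul_choose_three (n + T)
  push_cast at h2 h3 ⊢
  linear_combination 12 * h2 - 12 * two_mul_choose_two_s14 n - 40 * h3 + 40 * six_mul_choose_three n

lemma two_pow_dvd_three_mul_eulerE_sub {p T : ℕ} (n : ℕ) (hp : 3 ≤ p) (hT : 2 ^ p ∣ T) :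
    (2 : ℤ) ^ (p + 5) ∣
      3 * (eulerE (2 * (n + T)) - eulerE (2 * n)) - T * (-98 + 264 * n - 120 * n ^ 2) := by
  have hsplit : eulerE (2 * (n + T)) - eulerE (2 * n) =
      ∑ j ∈ range 4, (((n + T).choose j : ℤ) - n.choose j) * eulerDiff j +
        ∑ i ∈ range (n + T),
          (((n + T).choose (4 + i) : ℤ) - n.choose (4 + i)) * eulerDiff (4 + i) := by
    rw [eulerE_two_mul_eq_sum (N := 4 + (n + T)) (by omega),
      eulerE_two_mul_eq_sum (n := n) (N := 4 + (n + T)) (by omega), ← sum_sub_distrib,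
      sum_range_add]
    simp only [sub_mul]
  have htail := dvd_sum fun i (_ : i ∈ range (n + T)) ↦
    two_pow_dvd_choose_add_sub_choose_mul_eulerDiff n hT (Nat.le_add_right 4 i)
  obtain ⟨q, rfl⟩ : ∃ q, p = q + 3 := ⟨p - 3, by omega⟩
  obtain ⟨k, rfl⟩ := hT
  have hsquare : (2 : ℤ) ^ (q + 3 + 5) ∣ 4 * ((2 ^ (q + 3) * k : ℕ) : ℤ) ^ 2 * (33 - 30 * n) :=
    ⟨2 ^ q * k ^ 2 * (33 - 30 * n), by push_cast; ring⟩
  have hcube : (2 : ℤ) ^ (q + 3 + 5) ∣ 40 * ((2 ^ (q + 3) * k : ℕ) : ℤ) ^ 3 :=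
    ⟨5 * 2 ^ (2 * q + 4) * k ^ 3, by push_cast; ring⟩
  rw [hsplit, mul_add, three_mul_sum_range_four]
  exact (dvd_add (dvd_sub hsquare hcube) (htail.mul_left 3)).trans (dvd_of_eq (by ring))

lemma eulerE_add_modEq {p : ℕ} (k n : ℕ) (hp : 3 ≤ p) {c : ℤ}
    (hc : (32 : ℤ) ∣ -98 + 264 * n - 120 * n ^ 2 - 6 * c) :
    eulerE (2 ^ (p + 1) * k + 2 * n) ≡ eulerE (2 * n) + c * 2 ^ (p + 1) * k [ZMOD 2 ^ (p + 5)] := by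
  have h := two_pow_dvd_three_mul_eulerE_sub n hp (dvd_mul_right (2 ^ p) k)
  have hc' : (2 : ℤ) ^ (p + 5) ∣ (2 ^ p * k : ℕ) * (-98 + 264 * n - 120 * n ^ 2 - 6 * c) := by
    rw [pow_add]
    exact mul_dvd_mul (by push_cast; exact dvd_mul_right _ _) (by norm_num [hc])
  rw [show 2 ^ (p + 1) * k + 2 * n = 2 * (n + 2 ^ p * k) by ring]
  refine (Int.modEq_iff_dvd.2 ?_).symm
  refine (IsCoprime.pow_left (by norm_num : IsCoprime (2 : ℤ) 3)).dvd_of_dvd_mul_left ?_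
  exact (dvd_add h hc').trans (dvd_of_eq (by push_cast; ring))

lemma thirty_two_dvd_of_mod_four (n : ℕ) (c : ℤ)
    (h : (32 : ℤ) ∣ -98 + 264 * (n % 4 : ℕ) - 120 * (n % 4 : ℕ) ^ 2 - 6 * c) :
    (32 : ℤ) ∣ -98 + 264 * n - 120 * n ^ 2 - 6 * c := by
  rw [← Nat.div_add_mod n 4]
  refine (dvd_add h (dvd_mul_right 32 (33 * (n / 4 : ℕ) - 60 * (n / 4 : ℕ) ^ 2 -
    30 * (n / 4 : ℕ) * (n % 4 : ℕ) : ℤ))).trans (dvd_of_eq ?_)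
  push_cast
  ring

theorem stern_congruence_m_ge_four_general (b k m : ℕ) (hb : Even b) (hm : 4 ≤ m) :
    ((b % 8 = 0 ∨ b % 8 = 6) →
      eulerE (2 ^ m * k + b) ≡ eulerE b + 5 * 2 ^ m * k [ZMOD 2 ^ (m + 4)]) ∧
    ((b % 8 = 2 ∨ b % 8 = 4) →
      eulerE (2 ^ m * k + b) ≡ eulerE b - 3 * 2 ^ m * k [ZMOD 2 ^ (m + 4)]) := by
  obtain ⟨n, rfl⟩ := hb
  obtain ⟨p, rfl⟩ : ∃ p, m = p + 1 := ⟨m - 1, by omega⟩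
  rw [← two_mul]
  refine ⟨fun h ↦ eulerE_add_modEq k n (by omega) (thirty_two_dvd_of_mod_four n _ ?_), fun h ↦ ?_⟩
  · rcases (by omega : n % 4 = 0 ∨ n % 4 = 3) with h4 | h4 <;> rw [h4] <;> norm_num
  · rw [sub_eq_add_neg, ← neg_mul, ← neg_mul]
    refine eulerE_add_modEq k n (by omega) (thirty_two_dvd_of_mod_four n _ ?_)
    rcases (by omega : n % 4 = 1 ∨ n % 4 = 2) with h4 | h4 <;> rw [h4] <;> norm_num

theorem stern_congruence_m_ge_four (b k m : ℕ) (hb : Even b) (hk : 0 < k) (hm : 4 ≤ m) :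
    ((b % 8 = 0 ∨ b % 8 = 6) →
      eulerE (2 ^ m * k + b) ≡ eulerE b + 5 * 2 ^ m * k [ZMOD 2 ^ (m + 4)]) ∧
    ((b % 8 = 2 ∨ b % 8 = 4) →
      eulerE (2 ^ m * k + b) ≡ eulerE b - 3 * 2 ^ m * k [ZMOD 2 ^ (m + 4)]) :=
  stern_congruence_m_ge_four_general b k m hb hm
end

section
/- Let k and m be positive integers with m ≥ 4. Then 3^{2^m k} ≡ 1 + 61·2^{m+2} k + 2^{2m+3} k^2 (mod 2^{m+9}). -/
/-!
Put `A = 61·2^(m+2)` and `B = 2^(2m+3)`. Modulo `2^(m+9)` one has `A² ≡ 2B` (as `61² ≡ 1 mod 8`)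
and `AB ≡ B² ≡ 0`, so `(1 + A + B)^k ≡ 1 + kA + k²B` by induction on `k`. It remains to see
`3^(2^m) ≡ 1 + A + B`, which holds for `m = 4` by computation and passes from `m` to `m + 1` by
squaring, since squaring doubles the modulus of a congruence between odd numbers.
-/

namespace Int

variable {N x A B : ℤ}

theorem pow_modEq_one_add_mul_add_mul_sq (hx : x ≡ 1 + A + B [ZMOD N]) (hA : N ∣ A ^ 2 - 2 * B)
    (hAB : N ∣ A * B) (hB : N ∣ B ^ 2) (k : ℕ) :
    x ^ k ≡ 1 + A * k + B * k ^ 2 [ZMOD N] := by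
  induction k with
  | zero => simp [Int.ModEq.refl]
  | succ k ih =>
    rw [pow_succ]
    refine (ih.mul hx).trans (Int.modEq_iff_dvd.mpr ?_).symm
    have hdefect : (1 + A * k + B * k ^ 2) * (1 + A + B) - (1 + A * ↑(k + 1) + B * ↑(k + 1) ^ 2)
        = (A ^ 2 - 2 * B) * k + A * B * (k + k ^ 2) + B ^ 2 * k ^ 2 := by
      push_cast; ring
    rw [hdefect]
    exact dvd_add (dvd_add (hA.mul_right _) (hAB.mul_right _)) (hB.mul_right _)

theorem sq_modEq_sq_mul_two {n y : ℤ} (hn : 2 ∣ n) (h : x ≡ y [ZMOD n]) :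
    x ^ 2 ≡ y ^ 2 [ZMOD 2 * n] := by
  obtain ⟨t, ht⟩ := Int.modEq_iff_dvd.mp h.symm
  obtain ⟨s, rfl⟩ := hn
  refine Int.modEq_iff_dvd.mpr ⟨-(t * y + s * t ^ 2), ?_⟩
  rw [show x = y + 2 * s * t by linarith]
  ring

end Int

theorem two_pow_dvd_coeff_products {m : ℕ} (hm : 3 ≤ m) :
    (2 : ℤ) ^ (m + 10) ∣ (61 * 2 ^ (m + 2)) ^ 2 - 2 * 2 ^ (2 * m + 3) ∧
      (2 : ℤ) ^ (m + 10) ∣ 61 * 2 ^ (m + 2) * 2 ^ (2 * m + 3) ∧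
      (2 : ℤ) ^ (m + 10) ∣ (2 ^ (2 * m + 3)) ^ 2 := by
  refine ⟨?_, ?_, ?_⟩
  · rw [show (61 * 2 ^ (m + 2) : ℤ) ^ 2 - 2 * 2 ^ (2 * m + 3) = 465 * 2 ^ (2 * m + 7) by ring]
    exact (pow_dvd_pow 2 (by omega)).mul_left _
  · rw [show (61 * 2 ^ (m + 2) * 2 ^ (2 * m + 3) : ℤ) = 61 * 2 ^ (3 * m + 5) by ring]
    exact (pow_dvd_pow 2 (by omega)).mul_left _
  · rw [← pow_mul]
    exact pow_dvd_pow 2 (by omega)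

theorem three_pow_two_pow_modEq {m : ℕ} (hm : 4 ≤ m) :
    (3 : ℤ) ^ 2 ^ m ≡ 1 + 61 * 2 ^ (m + 2) + 2 ^ (2 * m + 3) [ZMOD 2 ^ (m + 9)] := by
  induction m, hm using Nat.le_induction with
  | base => decide
  | succ m hm ih =>
    obtain ⟨hA, hAB, hB⟩ := two_pow_dvd_coeff_products (m := m) (by omega)
    have hsq : ((3 : ℤ) ^ 2 ^ m) ^ 2 ≡ (1 + 61 * 2 ^ (m + 2) + 2 ^ (2 * m + 3)) ^ 2
        [ZMOD 2 ^ (m + 10)] := by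
      simpa only [← pow_succ'] using Int.sq_modEq_sq_mul_two (dvd_pow_self 2 (by omega)) ih
    calc (3 : ℤ) ^ 2 ^ (m + 1) = ((3 : ℤ) ^ 2 ^ m) ^ 2 := by rw [pow_succ, pow_mul]
      _ ≡ (1 + 61 * 2 ^ (m + 2) + 2 ^ (2 * m + 3)) ^ 2 [ZMOD 2 ^ (m + 10)] := hsq
      _ ≡ 1 + 61 * 2 ^ (m + 2) * (2 : ℕ) + 2 ^ (2 * m + 3) * (2 : ℕ) ^ 2 [ZMOD 2 ^ (m + 10)] :=
        Int.pow_modEq_one_add_mul_add_mul_sq (Int.ModEq.refl _) hA hAB hB 2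
      _ = 1 + 61 * 2 ^ (m + 1 + 2) + 2 ^ (2 * (m + 1) + 3) := by push_cast; ring

theorem three_pow_two_pow_mul_mod_general (k m : ℕ) (hm : 4 ≤ m) :
    (3 : ℤ) ^ (2 ^ m * k) ≡
      1 + 61 * 2 ^ (m + 2) * k + 2 ^ (2 * m + 3) * (k : ℤ) ^ 2 [ZMOD 2 ^ (m + 9)] := by
  obtain ⟨hA, hAB, hB⟩ := two_pow_dvd_coeff_products (m := m) (by omega)
  have hdvd : (2 : ℤ) ^ (m + 9) ∣ 2 ^ (m + 10) := pow_dvd_pow 2 (by omega)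
  rw [pow_mul]
  exact Int.pow_modEq_one_add_mul_add_mul_sq (three_pow_two_pow_modEq hm)
    (hdvd.trans hA) (hdvd.trans hAB) (hdvd.trans hB) k

theorem three_pow_two_pow_mul_mod (k m : ℕ) (hk : 0 < k) (hm : 4 ≤ m) :
    (3 : ℤ) ^ (2 ^ m * k) ≡
      1 + 61 * 2 ^ (m + 2) * k + 2 ^ (2 * m + 3) * (k : ℤ) ^ 2 [ZMOD 2 ^ (m + 9)] :=
  three_pow_two_pow_mul_mod_general k m hm
end
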